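/- arXiv:2412.04538 — 4 statements merged into one kernel-verified Lean document; each statement's English description precedes it below -/
import Mathlib

section
/- (Convergence of DCGD) Suppose f is L-smooth and lower bounded by f*, the local gradients have B²-bounded dissimilarity, ωB² < 1, and 0 < γ ≤ 1/L. If the iterates satisfy x^{k+1} = x^k - γ(∇f(x^k) + ē^k) where E‖ē^k | x^k‖² ≤ ωB²‖∇f(x^k)‖², then (1/K) Σ_{k=0}^{K-1} E‖∇f(x^k)‖² ≤ 2(f(x^0) - f*) / (γ K (1 - ωB²)). -/
open Finset

open scoped RealInnerProductSpace

/-! With `γ L ≤ 1`, the smoothness upper bound turns one inexact gradient step into the descent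
`f(x⁺) ≤ f(x) - γ/2 (‖∇f(x)‖² - ‖e‖²)`, and the relative error bound `‖e‖² ≤ ωB² ‖∇f(x)‖²` keeps a
fraction `1 - ωB²` of the decrease. Summing the per-step decreases telescopes to `f(x⁰) - f*`. -/

section InexactGradientDescent

variable {E : Type*} [NormedAddCommGroup E] [InnerProductSpace ℝ E]

theorem inexact_gradient_step_le {f : E → ℝ} {L γ : ℝ} {x g e : E}
    (hsmooth : ∀ y, f y ≤ f x + ⟪g, y - x⟫ + L / 2 * ‖y - x‖ ^ 2)
    (hγ : 0 ≤ γ) (hγL : γ * L ≤ 1) :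
    f (x - γ • (g + e)) ≤ f x - γ / 2 * (‖g‖ ^ 2 - ‖e‖ ^ 2) := by
  set d := g + e
  have hquad : L / 2 * ‖γ • d‖ ^ 2 ≤ γ / 2 * ‖d‖ ^ 2 := by
    rw [norm_smul, mul_pow, Real.norm_eq_abs, sq_abs]
    nlinarith [mul_nonneg hγ (sq_nonneg ‖d‖), sub_nonneg.mpr hγL]
  -- `‖e‖² = ‖d - g‖²` expanded
  have hexpand : ‖d‖ ^ 2 - 2 * ⟪g, d⟫ = ‖e‖ ^ 2 - ‖g‖ ^ 2 := by
    have h := norm_sub_sq_real d g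
    rw [show d - g = e by simp [d], real_inner_comm] at h
    linarith
  calc f (x - γ • d)
      ≤ f x + ⟪g, -(γ • d)⟫ + L / 2 * ‖-(γ • d)‖ ^ 2 := by
        simpa only [sub_sub_cancel_left] using hsmooth (x - γ • d)
    _ ≤ f x - γ * ⟪g, d⟫ + γ / 2 * ‖d‖ ^ 2 := by
        rw [inner_neg_right, real_inner_smul_right, norm_neg]
        linarith
    _ = f x - γ / 2 * (‖g‖ ^ 2 - ‖e‖ ^ 2) := by linear_combination γ / 2 * hexpand

theorem sum_norm_sq_le_of_inexact_gradient_descent {f : E → ℝ} {g : E → E} {L fstar γ ρ : ℝ}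
    {K : ℕ} (hsmooth : ∀ x y, f y ≤ f x + ⟪g x, y - x⟫ + L / 2 * ‖y - x‖ ^ 2)
    (hlb : ∀ x, fstar ≤ f x) (hγ : 0 < γ) (hγL : γ * L ≤ 1) (hρ : ρ < 1) {x e : ℕ → E}
    (hiter : ∀ k < K, x (k + 1) = x k - γ • (g (x k) + e k))
    (herr : ∀ k < K, ‖e k‖ ^ 2 ≤ ρ * ‖g (x k)‖ ^ 2) :
    ∑ k ∈ range K, ‖g (x k)‖ ^ 2 ≤ 2 * (f (x 0) - fstar) / (γ * (1 - ρ)) := by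
  have hdescent : ∀ k < K,
      γ * (1 - ρ) / 2 * ‖g (x k)‖ ^ 2 ≤ f (x k) - f (x (k + 1)) := by
    intro k hk
    have hstep := inexact_gradient_step_le (e := e k) (hsmooth (x k)) hγ.le hγL
    have herr' := mul_le_mul_of_nonneg_left (herr k hk) (by positivity : 0 ≤ γ / 2)
    rw [hiter k hk]
    linarith
  have htelescope : ∑ k ∈ range K, γ * (1 - ρ) / 2 * ‖g (x k)‖ ^ 2 ≤ f (x 0) - fstar :=
    calc ∑ k ∈ range K, γ * (1 - ρ) / 2 * ‖g (x k)‖ ^ 2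
        ≤ ∑ k ∈ range K, (f (x k) - f (x (k + 1))) :=
          sum_le_sum fun k hk => hdescent k (mem_range.mp hk)
      _ = f (x 0) - f (x K) := sum_range_sub' (fun k => f (x k)) K
      _ ≤ f (x 0) - fstar := by linarith [hlb (x K)]
  rw [← mul_sum] at htelescope
  rw [le_div_iff₀ (mul_pos hγ (sub_pos.mpr hρ))]
  linarith

end InexactGradientDescent

theorem dcgd_convergence_general {d : ℕ} (f : EuclideanSpace ℝ (Fin d) → ℝ)
    (L fstar γ ω B2 : ℝ) (K : ℕ)
    (hsmooth : ∀ x y, f y ≤ f x + (inner ℝ (gradient f x) (y - x) : ℝ) + L / 2 * ‖y - x‖ ^ 2)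
    (hlb : ∀ x, fstar ≤ f x)
    (hωB : ω * B2 < 1)
    (hγ0 : 0 < γ) (hγ : γ ≤ 1 / L)
    (x e : ℕ → EuclideanSpace ℝ (Fin d))
    (hiter : ∀ k < K, x (k + 1) = x k - γ • (gradient f (x k) + e k))
    (herr : ∀ k < K, ‖e k‖ ^ 2 ≤ ω * B2 * ‖gradient f (x k)‖ ^ 2) :
    (K : ℝ)⁻¹ * ∑ k ∈ range K, ‖gradient f (x k)‖ ^ 2
      ≤ 2 * (f (x 0) - fstar) / (γ * K * (1 - ω * B2)) := by
  have hL : 0 < L := by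
    by_contra! hL
    linarith [div_nonpos_of_nonneg_of_nonpos zero_le_one hL]
  have hγL : γ * L ≤ 1 := (le_div_iff₀ hL).mp hγ
  have hsum := sum_norm_sq_le_of_inexact_gradient_descent hsmooth hlb hγ0 hγL hωB hiter herr
  calc (K : ℝ)⁻¹ * ∑ k ∈ range K, ‖gradient f (x k)‖ ^ 2
      ≤ (K : ℝ)⁻¹ * (2 * (f (x 0) - fstar) / (γ * (1 - ω * B2))) := by gcongr
    _ = 2 * (f (x 0) - fstar) / (γ * K * (1 - ω * B2)) := by
        rw [inv_mul_eq_div, div_div, mul_right_comm]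

/-- Convergence of DCGD (deterministic form). -/
theorem dcgd_convergence {d : ℕ} (f : EuclideanSpace ℝ (Fin d) → ℝ)
    (L fstar γ ω B2 : ℝ) (K : ℕ) (hK : 1 ≤ K)
    (hf : Differentiable ℝ f)
    (hsmooth : ∀ x y, f y ≤ f x + (inner ℝ (gradient f x) (y - x) : ℝ) + L / 2 * ‖y - x‖ ^ 2)
    (hlb : ∀ x, fstar ≤ f x)
    (hω0 : 0 ≤ ω) (hω : ω < 1) (hB2 : 1 ≤ B2) (hωB : ω * B2 < 1)
    (hγ0 : 0 < γ) (hγ : γ ≤ 1 / L)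
    (x e : ℕ → EuclideanSpace ℝ (Fin d))
    (hiter : ∀ k < K, x (k + 1) = x k - γ • (gradient f (x k) + e k))
    (herr : ∀ k < K, ‖e k‖ ^ 2 ≤ ω * B2 * ‖gradient f (x k)‖ ^ 2) :
    (K : ℝ)⁻¹ * ∑ k ∈ range K, ‖gradient f (x k)‖ ^ 2
      ≤ 2 * (f (x 0) - fstar) / (γ * K * (1 - ω * B2)) :=
  dcgd_convergence_general f L fstar γ ω B2 K hsmooth hlb hωB hγ0 hγ x e hiter herr
end

section
/- (CAFe compression error recursion, deterministic form) Suppose f = (1/N)Σ_n f_n is L-smooth with B²-bounded gradient dissimilarity, x^{k+1} = x^k − γ g^k with g^k = ∇f(x^k) + ē^k, and for each n the new error satisfies ‖ê_n^{k+1}‖² ≤ ω ‖∇f_n(x^{k+1}) − g^k‖². Then the averaged error ē^{k+1} = (1/N)Σ_n ê_n^{k+1} satisfies ‖ē^{k+1}‖² ≤ ω (B²‖∇f(x^{k+1})‖² − ‖∇f(x^k)‖²) + 2γωL‖g^k‖² + ω‖ē^k‖². -/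
/-!
Jensen's inequality bounds `‖ē^{k+1}‖²` by `ω` times the mean of `‖∇f_n(x^{k+1}) - g^k‖²`.
Expanding the squares around the mean `∇f(x^{k+1})` of the client gradients leaves
`(1/N) Σ ‖∇f_n(x^{k+1})‖² - 2⟪∇f(x^{k+1}), g^k⟫ + ‖g^k‖²`. The first term is controlled by
bounded dissimilarity; smoothness along the step `x^{k+1} = x^k - γ g^k` moves the inner product
back to `∇f(x^k)` at a cost of `2γL‖g^k‖²`, and `‖g^k‖² - 2⟪∇f(x^k), g^k⟫ = ‖ē^k‖² - ‖∇f(x^k)‖²`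
because `g^k - ∇f(x^k) = ē^k`.
-/

open Finset

section Averages

variable {ι E : Type*} [Fintype ι]

theorem norm_sq_mean_le_mean_norm_sq [SeminormedAddCommGroup E] [NormedSpace ℝ E]
    (v : ι → E) :
    ‖(Fintype.card ι : ℝ)⁻¹ • ∑ i, v i‖ ^ 2 ≤ (Fintype.card ι : ℝ)⁻¹ * ∑ i, ‖v i‖ ^ 2 := by
  set c : ℝ := (Fintype.card ι : ℝ)⁻¹
  have hc : 0 ≤ c := by positivity
  have hcs : (∑ i, ‖v i‖) ^ 2 ≤ Fintype.card ι * ∑ i, ‖v i‖ ^ 2 := by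
    simpa using sq_sum_le_card_mul_sum_sq (s := univ) (f := fun i => ‖v i‖)
  calc ‖c • ∑ i, v i‖ ^ 2 ≤ (c * ∑ i, ‖v i‖) ^ 2 := by
        rw [norm_smul, Real.norm_of_nonneg hc]
        gcongr
        exact norm_sum_le _ _
    _ = c * (c * (∑ i, ‖v i‖) ^ 2) := by ring
    _ ≤ c * (c * (Fintype.card ι * ∑ i, ‖v i‖ ^ 2)) := by gcongr
    _ ≤ c * ∑ i, ‖v i‖ ^ 2 := by
        gcongr
        rw [← mul_assoc]
        exact mul_le_of_le_one_left (by positivity)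
          (inv_mul_le_one_of_le₀ le_rfl (by positivity))

theorem mean_norm_sub_sq_eq [Nonempty ι] [NormedAddCommGroup E] [InnerProductSpace ℝ E]
    (v : ι → E) (w : E) :
    (Fintype.card ι : ℝ)⁻¹ * ∑ i, ‖v i - w‖ ^ 2 = (Fintype.card ι : ℝ)⁻¹ * ∑ i, ‖v i‖ ^ 2
      - 2 * inner ℝ ((Fintype.card ι : ℝ)⁻¹ • ∑ i, v i) w + ‖w‖ ^ 2 := by
  have hcard : (Fintype.card ι : ℝ) ≠ 0 := by positivity
  simp only [norm_sub_sq_real, sum_add_distrib, sum_sub_distrib, ← mul_sum, sum_const,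
    card_univ, nsmul_eq_mul, real_inner_smul_left, sum_inner]
  field_simp

end Averages

theorem gradient_const_mul_sum {ι E : Type*} [Fintype ι] [NormedAddCommGroup E]
    [InnerProductSpace ℝ E] [CompleteSpace E] {f : ι → E → ℝ} {y : E}
    (hf : ∀ i, DifferentiableAt ℝ (f i) y) (c : ℝ) :
    gradient (fun x => c * ∑ i, f i x) y = c • ∑ i, gradient (f i) y := by
  have hfderiv : fderiv ℝ (fun x => c * ∑ i, f i x) y = c • ∑ i, fderiv ℝ (f i) y := by
    rw [fderiv_const_mul (DifferentiableAt.fun_sum fun i _ => hf i),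
      fderiv_fun_sum fun i _ => hf i]
  simp only [gradient, hfderiv, map_smul, map_sum]

theorem inner_sub_step_le_of_lipschitz {E : Type*} [NormedAddCommGroup E]
    [InnerProductSpace ℝ E] {G : E → E} {L γ : ℝ} (hγ : 0 ≤ γ)
    (hG : ∀ x y, ‖G x - G y‖ ≤ L * ‖x - y‖) (x g : E) :
    inner ℝ (G x - G (x - γ • g)) g ≤ γ * L * ‖g‖ ^ 2 :=
  calc inner ℝ (G x - G (x - γ • g)) g ≤ ‖G x - G (x - γ • g)‖ * ‖g‖ := real_inner_le_norm _ _
    _ ≤ L * ‖x - (x - γ • g)‖ * ‖g‖ := by gcongr; exact hG _ _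
    _ = γ * L * ‖g‖ ^ 2 := by
        rw [sub_sub_cancel, norm_smul, Real.norm_of_nonneg hγ]
        ring

theorem cafe_error_recursion_general {d N : ℕ} (hN : 0 < N)
    (f : Fin N → EuclideanSpace ℝ (Fin d) → ℝ)
    (F : EuclideanSpace ℝ (Fin d) → ℝ)
    (hF : ∀ x, F x = (N : ℝ)⁻¹ * ∑ n : Fin N, f n x)
    (hfdiff : ∀ n, Differentiable ℝ (f n))
    (L γ ω B2 : ℝ) (hγ : 0 < γ)
    (hω0 : 0 ≤ ω)
    (hLip : ∀ x y, ‖gradient F x - gradient F y‖ ≤ L * ‖x - y‖)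
    (hdiss : ∀ x, (N : ℝ)⁻¹ * ∑ n : Fin N, ‖gradient (f n) x‖ ^ 2
        ≤ B2 * ‖gradient F x‖ ^ 2)
    (x xp g ebar ebarp : EuclideanSpace ℝ (Fin d))
    (ehatp : Fin N → EuclideanSpace ℝ (Fin d))
    (hg : g = gradient F x + ebar)
    (hxp : xp = x - γ • g)
    (hehatp : ∀ n, ‖ehatp n‖ ^ 2 ≤ ω * ‖gradient (f n) xp - g‖ ^ 2)
    (hebarp : ebarp = (N : ℝ)⁻¹ • ∑ n : Fin N, ehatp n) :
    ‖ebarp‖ ^ 2 ≤ ω * (B2 * ‖gradient F xp‖ ^ 2 - ‖gradient F x‖ ^ 2)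
      + 2 * γ * ω * L * ‖g‖ ^ 2 + ω * ‖ebar‖ ^ 2 := by
  have : NeZero N := ⟨hN.ne'⟩
  have hgrad : gradient F xp = (N : ℝ)⁻¹ • ∑ n, gradient (f n) xp := by
    rw [funext hF]
    exact gradient_const_mul_sum (fun n => (hfdiff n).differentiableAt) _
  have hjensen : ‖ebarp‖ ^ 2 ≤ (N : ℝ)⁻¹ * ∑ n, ‖ehatp n‖ ^ 2 := by
    simpa [hebarp] using norm_sq_mean_le_mean_norm_sq ehatp
  have hcompress : (N : ℝ)⁻¹ * ∑ n, ‖ehatp n‖ ^ 2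
      ≤ ω * ((N : ℝ)⁻¹ * ∑ n, ‖gradient (f n) xp - g‖ ^ 2) := by
    calc (N : ℝ)⁻¹ * ∑ n, ‖ehatp n‖ ^ 2
        ≤ (N : ℝ)⁻¹ * ∑ n, ω * ‖gradient (f n) xp - g‖ ^ 2 := by
          gcongr with n
          exact hehatp n
      _ = ω * ((N : ℝ)⁻¹ * ∑ n, ‖gradient (f n) xp - g‖ ^ 2) := by rw [← mul_sum]; ring
  have hspread : (N : ℝ)⁻¹ * ∑ n, ‖gradient (f n) xp - g‖ ^ 2
      = (N : ℝ)⁻¹ * ∑ n, ‖gradient (f n) xp‖ ^ 2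
        - 2 * inner ℝ (gradient F xp) g + ‖g‖ ^ 2 := by
    simpa [hgrad] using mean_norm_sub_sq_eq (fun n => gradient (f n) xp) g
  have hstep : inner ℝ (gradient F x - gradient F xp) g ≤ γ * L * ‖g‖ ^ 2 :=
    hxp ▸ inner_sub_step_le_of_lipschitz hγ.le hLip x g
  have hpolar : ‖ebar‖ ^ 2 = ‖g‖ ^ 2 - 2 * inner ℝ (gradient F x) g + ‖gradient F x‖ ^ 2 := by
    rw [eq_sub_of_add_eq' hg.symm, norm_sub_sq_real, real_inner_comm]
  have hmean : (N : ℝ)⁻¹ * ∑ n, ‖gradient (f n) xp - g‖ ^ 2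
      ≤ B2 * ‖gradient F xp‖ ^ 2 - ‖gradient F x‖ ^ 2 + 2 * γ * L * ‖g‖ ^ 2 + ‖ebar‖ ^ 2 := by
    rw [inner_sub_left] at hstep
    linarith [hdiss xp]
  linarith [mul_le_mul_of_nonneg_left hmean hω0]

/-- CAFe compression error recursion (deterministic form). -/
theorem cafe_error_recursion {d N : ℕ} (hN : 0 < N)
    (f : Fin N → EuclideanSpace ℝ (Fin d) → ℝ)
    (F : EuclideanSpace ℝ (Fin d) → ℝ)
    (hF : ∀ x, F x = (N : ℝ)⁻¹ * ∑ n : Fin N, f n x)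
    (hfdiff : ∀ n, Differentiable ℝ (f n)) (hFdiff : Differentiable ℝ F)
    (L γ ω B2 : ℝ) (hL : 0 < L) (hγ : 0 < γ)
    (hω0 : 0 ≤ ω) (hω : ω < 1) (hB2 : 1 ≤ B2)
    (hLip : ∀ x y, ‖gradient F x - gradient F y‖ ≤ L * ‖x - y‖)
    (hdiss : ∀ x, (N : ℝ)⁻¹ * ∑ n : Fin N, ‖gradient (f n) x‖ ^ 2
        ≤ B2 * ‖gradient F x‖ ^ 2)
    (x xp g ebar ebarp : EuclideanSpace ℝ (Fin d))
    (ehat ehatp : Fin N → EuclideanSpace ℝ (Fin d))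
    (hebar : ebar = (N : ℝ)⁻¹ • ∑ n : Fin N, ehat n)
    (hg : g = gradient F x + ebar)
    (hxp : xp = x - γ • g)
    (hehatp : ∀ n, ‖ehatp n‖ ^ 2 ≤ ω * ‖gradient (f n) xp - g‖ ^ 2)
    (hebarp : ebarp = (N : ℝ)⁻¹ • ∑ n : Fin N, ehatp n) :
    ‖ebarp‖ ^ 2 ≤ ω * (B2 * ‖gradient F xp‖ ^ 2 - ‖gradient F x‖ ^ 2)
      + 2 * γ * ω * L * ‖g‖ ^ 2 + ω * ‖ebar‖ ^ 2 :=
  cafe_error_recursion_general hN f F hF hfdiff L γ ω B2 hγ hω0 hLip hdiss x xp g ebar ebarp ehatp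
    hg hxp hehatp hebarp
end

section
/- (Convergence of CAFe + DGD, deterministic form) Suppose f is L-smooth and bounded below by f*, gradients have B²-bounded dissimilarity with ωB² < 1, ω < 1, and 0 < γ ≤ (1−ω)/(L(1+ω)). If x^{k+1} = x^k − γg^k with g^k = ∇f(x^k) + ē^k, ē^0 = 0, and the error recursion ‖ē^{k+1}‖² ≤ ω(B²‖∇f(x^{k+1})‖² − ‖∇f(x^k)‖²) + 2γωL‖g^k‖² + ω‖ē^k‖² holds for all k, then (1/K)Σ_{k=0}^{K-1}‖∇f(x^k)‖² ≤ 2(f(x^0) − f*)(1−ω)/(γK(1−ωB²)). -/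
/-!
The function `Φᵏ = f(xᵏ) + γ/(2(1-ω)) (‖ēᵏ‖² - ωB²‖∇f(xᵏ)‖²)` decreases along the iteration by at
least `γ(1-ωB²)/(2(1-ω)) ‖∇f(xᵏ)‖²`: the descent inequality accounts for `f`, the error recursion
scaled by `γ/(2(1-ω))` for the error term, and the step-size condition makes the remaining
coefficient of `‖gᵏ‖²` nonpositive. The decreases therefore sum to at most `Φ⁰ - Φᴷ ≤ f(x⁰) - f*`:
`Φ⁰ ≤ f(x⁰)` because `ē⁰ = 0`, and `f* ≤ Φᴷ` because `‖∇f‖² ≤ 2L(f - f*)` while the step-size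
condition gives `2L · γωB²/(2(1-ω)) ≤ 1`.
-/

open Finset RealInnerProductSpace

section QuadraticUpperBound

variable {E : Type*} [NormedAddCommGroup E] [InnerProductSpace ℝ E] {f : E → ℝ} {x v : E} {L : ℝ}

theorem sq_norm_le_of_quadratic_upper_bound (hL : 0 < L)
    (hf : ∀ y, f y ≤ f x + ⟪v, y - x⟫ + L / 2 * ‖y - x‖ ^ 2) {fstar : ℝ} (hlb : ∀ y, fstar ≤ f y) :
    ‖v‖ ^ 2 ≤ 2 * L * (f x - fstar) := by
  have h := hf (x - L⁻¹ • v)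
  rw [sub_sub_cancel_left, inner_neg_right, real_inner_smul_right, real_inner_self_eq_norm_sq,
    norm_neg, norm_smul, mul_pow, Real.norm_eq_abs, sq_abs] at h
  have hquad : -(L⁻¹ * ‖v‖ ^ 2) + L / 2 * (L⁻¹ ^ 2 * ‖v‖ ^ 2) = -(‖v‖ ^ 2 / (2 * L)) := by
    field_simp; ring
  have key : ‖v‖ ^ 2 / (2 * L) ≤ f x - fstar := by linarith [hlb (x - L⁻¹ • v)]
  rwa [div_le_iff₀ (by positivity), mul_comm] at key

theorem descent_of_quadratic_upper_bound (hf : ∀ y, f y ≤ f x + ⟪v, y - x⟫ + L / 2 * ‖y - x‖ ^ 2)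
    (γ : ℝ) (e : E) :
    f (x - γ • (v + e)) ≤ f x - γ / 2 * ‖v‖ ^ 2 + γ / 2 * ‖e‖ ^ 2
      - (γ / 2 - L * γ ^ 2 / 2) * ‖v + e‖ ^ 2 := by
  have h := hf (x - γ • (v + e))
  rw [sub_sub_cancel_left, inner_neg_right, real_inner_smul_right, norm_neg, norm_smul, mul_pow,
    Real.norm_eq_abs, sq_abs] at h
  have hpolar : ⟪v, v + e⟫ = (‖v‖ ^ 2 + ‖v + e‖ ^ 2 - ‖e‖ ^ 2) / 2 := by
    rw [norm_add_sq_real, inner_add_right, real_inner_self_eq_norm_sq]; ring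
  rw [hpolar] at h
  linarith

end QuadraticUpperBound

theorem sum_range_le_sub_of_succ_le {Φ u : ℕ → ℝ} (h : ∀ k, Φ (k + 1) ≤ Φ k - u k) (n : ℕ) :
    ∑ k ∈ range n, u k ≤ Φ 0 - Φ n := by
  rw [← sum_range_sub']
  exact sum_le_sum fun k _ => by linarith [h k]

/-- Evaluated at `fx = f(xᵏ)`, `gsq = ‖∇f(xᵏ)‖²`, `esq = ‖ēᵏ‖²`, this is the paper's `Ψᵏ` minus
`γωB²/(2(1-ω)) ‖∇f(xᵏ)‖²`, a correction that makes the one-step decrease telescope. -/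
noncomputable def cafeLyapunov (γ ω B2 fx gsq esq : ℝ) : ℝ :=
  fx + γ / (2 * (1 - ω)) * (esq - ω * B2 * gsq)

section Lyapunov

variable {γ ω B2 L : ℝ}

theorem cafeLyapunov_succ_le (hω : ω < 1) (hγ : 0 ≤ γ) (hLγ : L * γ * (1 + ω) ≤ 1 - ω)
    {fx fx' gsq gsq' esq esq' gk : ℝ} (hgk : 0 ≤ gk)
    (hdesc : fx' ≤ fx - γ / 2 * gsq + γ / 2 * esq - (γ / 2 - L * γ ^ 2 / 2) * gk)
    (hrec : esq' ≤ ω * (B2 * gsq' - gsq) + 2 * γ * ω * L * gk + ω * esq) :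
    cafeLyapunov γ ω B2 fx' gsq' esq'
      ≤ cafeLyapunov γ ω B2 fx gsq esq - γ * (1 - ω * B2) / (2 * (1 - ω)) * gsq := by
  have hω' : 0 < 1 - ω := by linarith
  unfold cafeLyapunov
  obtain ⟨D, rfl, hD⟩ : ∃ D, γ = 2 * D * (1 - ω) ∧ 0 ≤ D :=
    ⟨γ / (2 * (1 - ω)), by field_simp, by positivity⟩
  have hDω : 2 * D * (1 - ω) / (2 * (1 - ω)) = D := by field_simp
  have hDωB : 2 * D * (1 - ω) * (1 - ω * B2) / (2 * (1 - ω)) = D * (1 - ω * B2) := by field_simp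
  rw [hDω, hDωB]
  have hLD : 2 * L * D * (1 + ω) ≤ 1 := by nlinarith
  nlinarith [mul_le_mul_of_nonneg_left hrec hD, mul_nonneg (mul_nonneg hD hω'.le) hgk]

theorem le_cafeLyapunov (hω : ω < 1) (hγ : 0 ≤ γ) (hωB : 0 ≤ ω * B2)
    (hLγ : L * γ * (ω * B2) ≤ 1 - ω) {fstar fx gsq esq : ℝ} (hgsq : gsq ≤ 2 * L * (fx - fstar))
    (hfx : fstar ≤ fx) (hesq : 0 ≤ esq) : fstar ≤ cafeLyapunov γ ω B2 fx gsq esq := by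
  have hω' : 0 < 1 - ω := by linarith
  have hc : 2 * L * (γ / (2 * (1 - ω)) * (ω * B2)) ≤ 1 := by
    rw [show 2 * L * (γ / (2 * (1 - ω)) * (ω * B2)) = L * γ * (ω * B2) / (1 - ω) by
      field_simp, div_le_one hω']
    exact hLγ
  have hD : 0 ≤ γ / (2 * (1 - ω)) := by positivity
  unfold cafeLyapunov
  nlinarith [mul_le_mul_of_nonneg_left hgsq (mul_nonneg hD hωB), mul_nonneg hD hesq,
    mul_nonneg (sub_nonneg.2 hc) (sub_nonneg.2 hfx)]

theorem cafeLyapunov_zero_le (hω : ω < 1) (hγ : 0 ≤ γ) (hωB : 0 ≤ ω * B2) {fx gsq : ℝ}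
    (hgsq : 0 ≤ gsq) : cafeLyapunov γ ω B2 fx gsq 0 ≤ fx := by
  have hD : 0 ≤ γ / (2 * (1 - ω)) := div_nonneg hγ (by linarith)
  unfold cafeLyapunov
  nlinarith [mul_nonneg hD (mul_nonneg hωB hgsq)]

end Lyapunov

theorem cafe_convergence_general {d : ℕ} (f : EuclideanSpace ℝ (Fin d) → ℝ)
    (L fstar γ ω B2 : ℝ) (K : ℕ) (hL : 0 < L)
    (hsmooth : ∀ x y, f y ≤ f x + (inner ℝ (gradient f x) (y - x) : ℝ) + L / 2 * ‖y - x‖ ^ 2)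
    (hlb : ∀ x, fstar ≤ f x)
    (hω0 : 0 ≤ ω) (hω : ω < 1) (hB2 : 1 ≤ B2) (hωB : ω * B2 < 1)
    (hγ0 : 0 < γ) (hγ : γ ≤ (1 - ω) / (L * (1 + ω)))
    (x e g : ℕ → EuclideanSpace ℝ (Fin d))
    (hg : ∀ k, g k = gradient f (x k) + e k)
    (hiter : ∀ k, x (k + 1) = x k - γ • g k)
    (he0 : e 0 = 0)
    (hrec : ∀ k, ‖e (k + 1)‖ ^ 2
        ≤ ω * (B2 * ‖gradient f (x (k + 1))‖ ^ 2 - ‖gradient f (x k)‖ ^ 2)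
          + 2 * γ * ω * L * ‖g k‖ ^ 2 + ω * ‖e k‖ ^ 2) :
    (K : ℝ)⁻¹ * ∑ k ∈ range K, ‖gradient f (x k)‖ ^ 2
      ≤ 2 * (f (x 0) - fstar) * (1 - ω) / (γ * K * (1 - ω * B2)) := by
  have hLγ : L * γ * (1 + ω) ≤ 1 - ω := by
    have := (le_div_iff₀ (by positivity)).mp hγ; linarith
  have hωB0 : 0 ≤ ω * B2 := mul_nonneg hω0 (by linarith)
  have hdesc : ∀ k, f (x (k + 1)) ≤ f (x k) - γ / 2 * ‖gradient f (x k)‖ ^ 2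
      + γ / 2 * ‖e k‖ ^ 2 - (γ / 2 - L * γ ^ 2 / 2) * ‖g k‖ ^ 2 := fun k => by
    rw [hiter k, hg k]; exact descent_of_quadratic_upper_bound (hsmooth (x k)) γ (e k)
  set Φ : ℕ → ℝ := fun k => cafeLyapunov γ ω B2 (f (x k)) (‖gradient f (x k)‖ ^ 2) (‖e k‖ ^ 2)
  have hstep : ∀ k, Φ (k + 1) ≤ Φ k - γ * (1 - ω * B2) / (2 * (1 - ω)) * ‖gradient f (x k)‖ ^ 2 :=
    fun k => cafeLyapunov_succ_le hω hγ0.le hLγ (sq_nonneg ‖g k‖) (hdesc k) (hrec k)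
  have hΦK : fstar ≤ Φ K := le_cafeLyapunov hω hγ0.le hωB0 (hLγ.trans' (by gcongr; linarith))
    (sq_norm_le_of_quadratic_upper_bound hL (hsmooth (x K)) hlb) (hlb _) (sq_nonneg _)
  have hΦ0 : Φ 0 ≤ f (x 0) := by
    simpa [Φ, he0] using cafeLyapunov_zero_le (fx := f (x 0)) hω hγ0.le hωB0 (sq_nonneg _)
  have hsum := sum_range_le_sub_of_succ_le hstep K
  rw [← mul_sum, div_mul_eq_mul_div, div_le_iff₀ (by linarith)] at hsum
  calc (K : ℝ)⁻¹ * ∑ k ∈ range K, ‖gradient f (x k)‖ ^ 2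
      ≤ (K : ℝ)⁻¹ * (2 * (f (x 0) - fstar) * (1 - ω) / (γ * (1 - ω * B2))) := by
        gcongr
        rw [le_div_iff₀ (mul_pos hγ0 (sub_pos.2 hωB))]
        nlinarith
    _ = 2 * (f (x 0) - fstar) * (1 - ω) / (γ * K * (1 - ω * B2)) := by
      rw [inv_mul_eq_div, div_div, mul_right_comm γ]

/-- Convergence of CAFe + DGD (deterministic form). -/
theorem cafe_convergence {d : ℕ} (f : EuclideanSpace ℝ (Fin d) → ℝ)
    (L fstar γ ω B2 : ℝ) (K : ℕ) (hK : 1 ≤ K)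
    (hf : Differentiable ℝ f) (hL : 0 < L)
    (hsmooth : ∀ x y, f y ≤ f x + (inner ℝ (gradient f x) (y - x) : ℝ) + L / 2 * ‖y - x‖ ^ 2)
    (hlb : ∀ x, fstar ≤ f x)
    (hω0 : 0 ≤ ω) (hω : ω < 1) (hB2 : 1 ≤ B2) (hωB : ω * B2 < 1)
    (hγ0 : 0 < γ) (hγ : γ ≤ (1 - ω) / (L * (1 + ω)))
    (x e g : ℕ → EuclideanSpace ℝ (Fin d))
    (hg : ∀ k, g k = gradient f (x k) + e k)
    (hiter : ∀ k, x (k + 1) = x k - γ • g k)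
    (he0 : e 0 = 0)
    (hrec : ∀ k, ‖e (k + 1)‖ ^ 2
        ≤ ω * (B2 * ‖gradient f (x (k + 1))‖ ^ 2 - ‖gradient f (x k)‖ ^ 2)
          + 2 * γ * ω * L * ‖g k‖ ^ 2 + ω * ‖e k‖ ^ 2) :
    (K : ℝ)⁻¹ * ∑ k ∈ range K, ‖gradient f (x k)‖ ^ 2
      ≤ 2 * (f (x 0) - fstar) * (1 - ω) / (γ * K * (1 - ω * B2)) :=
  cafe_convergence_general f L fstar γ ω B2 K hL hsmooth hlb hω0 hω hB2 hωB hγ0 hγ x e g hg hiter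
    he0 hrec
end

section
/- (Telescoped DCGD bound with tuned step size) Under L-smoothness of f bounded below by f*, B²-bounded dissimilarity, ωB² < 1, and γ = 1/L, deterministic DCGD iterates x^{k+1} = x^k − γ(∇f(x^k) + ē^k) with ‖ē^k‖² ≤ ωB²‖∇f(x^k)‖² satisfy (1/K)Σ_{k=0}^{K-1}‖∇f(x^k)‖² ≤ 2L(f(x^0) − f*)/(K(1 − ωB²)). -/
open Finset

/- With step `1/L`, the smoothness upper bound evaluated at `x - (g + e)/L` collapses exactly to
`f x - (‖g‖² - ‖e‖²)/(2L)`, so the relative error bound `‖e‖² ≤ ωB²‖g‖²` leaves a guaranteed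
decrease of `(1 - ωB²)‖g‖²/(2L)` per step; summing these decreases telescopes to at most
`f(x⁰) - f*`. -/

section Descent

variable {E : Type*} [NormedAddCommGroup E] [InnerProductSpace ℝ E]

theorem inner_neg_smul_add_add_norm_sq {L : ℝ} (hL : L ≠ 0) (g e : E) :
    inner ℝ g (-(L⁻¹ • (g + e))) + L / 2 * ‖-(L⁻¹ • (g + e))‖ ^ 2
      = (‖e‖ ^ 2 - ‖g‖ ^ 2) / (2 * L) := by
  rw [inner_neg_right, inner_smul_right, inner_add_right, real_inner_self_eq_norm_sq,
    norm_neg, norm_smul, mul_pow, norm_add_sq_real, Real.norm_eq_abs, sq_abs]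
  field_simp
  ring

theorem descent_of_smooth_of_inexact_step {f : E → ℝ} {grad : E → E} {L : ℝ} (hL : 0 < L)
    (hsmooth : ∀ x y, f y ≤ f x + inner ℝ (grad x) (y - x) + L / 2 * ‖y - x‖ ^ 2)
    (x e : E) :
    f (x - L⁻¹ • (grad x + e)) ≤ f x + (‖e‖ ^ 2 - ‖grad x‖ ^ 2) / (2 * L) := by
  have h := hsmooth x (x - L⁻¹ • (grad x + e))
  rwa [sub_sub_cancel_left, add_assoc, inner_neg_smul_add_add_norm_sq hL.ne'] at h

end Descent

theorem mul_sum_range_le_sub_of_decrease {a b : ℕ → ℝ} {c : ℝ} {K : ℕ}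
    (h : ∀ k < K, a (k + 1) ≤ a k - c * b k) :
    c * ∑ k ∈ range K, b k ≤ a 0 - a K := by
  rw [mul_sum, ← sum_range_sub' a K]
  exact sum_le_sum fun k hk => by linarith [h k (mem_range.mp hk)]

theorem dcgd_tuned_bound_general {d : ℕ} (f : EuclideanSpace ℝ (Fin d) → ℝ)
    (L fstar γ ω B2 : ℝ) (K : ℕ)
    (hL : 0 < L)
    (hsmooth : ∀ x y, f y ≤ f x + (inner ℝ (gradient f x) (y - x) : ℝ) + L / 2 * ‖y - x‖ ^ 2)
    (hlb : ∀ x, fstar ≤ f x)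
    (hωB : ω * B2 < 1)
    (hγ : γ = 1 / L)
    (x e : ℕ → EuclideanSpace ℝ (Fin d))
    (hiter : ∀ k < K, x (k + 1) = x k - γ • (gradient f (x k) + e k))
    (herr : ∀ k < K, ‖e k‖ ^ 2 ≤ ω * B2 * ‖gradient f (x k)‖ ^ 2) :
    (K : ℝ)⁻¹ * ∑ k ∈ range K, ‖gradient f (x k)‖ ^ 2
      ≤ 2 * L * (f (x 0) - fstar) / (K * (1 - ω * B2)) := by
  have hstep : ∀ k < K, f (x (k + 1))
      ≤ f (x k) - (1 - ω * B2) / (2 * L) * ‖gradient f (x k)‖ ^ 2 := fun k hk => by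
    have h := descent_of_smooth_of_inexact_step hL hsmooth (x k) (e k)
    rw [← one_div, ← hγ, ← hiter k hk] at h
    calc f (x (k + 1)) ≤ f (x k) + (‖e k‖ ^ 2 - ‖gradient f (x k)‖ ^ 2) / (2 * L) := h
      _ ≤ f (x k) + (ω * B2 * ‖gradient f (x k)‖ ^ 2 - ‖gradient f (x k)‖ ^ 2) / (2 * L) := by
        gcongr; exact herr k hk
      _ = f (x k) - (1 - ω * B2) / (2 * L) * ‖gradient f (x k)‖ ^ 2 := by ring
  have hsum : ∑ k ∈ range K, ‖gradient f (x k)‖ ^ 2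
      ≤ 2 * L * (f (x 0) - fstar) / (1 - ω * B2) := by
    rw [le_div_iff₀ (by linarith)]
    calc (∑ k ∈ range K, ‖gradient f (x k)‖ ^ 2) * (1 - ω * B2)
        = 2 * L * ((1 - ω * B2) / (2 * L) * ∑ k ∈ range K, ‖gradient f (x k)‖ ^ 2) := by
          field_simp
      _ ≤ 2 * L * (f (x 0) - fstar) := by
          gcongr
          linarith [mul_sum_range_le_sub_of_decrease (a := fun k => f (x k)) hstep, hlb (x K)]
  calc (K : ℝ)⁻¹ * ∑ k ∈ range K, ‖gradient f (x k)‖ ^ 2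
      ≤ (K : ℝ)⁻¹ * (2 * L * (f (x 0) - fstar) / (1 - ω * B2)) := by gcongr
    _ = 2 * L * (f (x 0) - fstar) / (K * (1 - ω * B2)) := by
      rw [inv_mul_eq_div, div_div, mul_comm (1 - ω * B2)]

/-- Telescoped DCGD bound with tuned step size `γ = 1/L`. -/
theorem dcgd_tuned_bound {d : ℕ} (f : EuclideanSpace ℝ (Fin d) → ℝ)
    (L fstar γ ω B2 : ℝ) (K : ℕ) (hK : 1 ≤ K)
    (hf : Differentiable ℝ f) (hL : 0 < L)
    (hsmooth : ∀ x y, f y ≤ f x + (inner ℝ (gradient f x) (y - x) : ℝ) + L / 2 * ‖y - x‖ ^ 2)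
    (hlb : ∀ x, fstar ≤ f x)
    (hω0 : 0 ≤ ω) (hω : ω < 1) (hB2 : 1 ≤ B2) (hωB : ω * B2 < 1)
    (hγ : γ = 1 / L)
    (x e : ℕ → EuclideanSpace ℝ (Fin d))
    (hiter : ∀ k < K, x (k + 1) = x k - γ • (gradient f (x k) + e k))
    (herr : ∀ k < K, ‖e k‖ ^ 2 ≤ ω * B2 * ‖gradient f (x k)‖ ^ 2) :
    (K : ℝ)⁻¹ * ∑ k ∈ range K, ‖gradient f (x k)‖ ^ 2
      ≤ 2 * L * (f (x 0) - fstar) / (K * (1 - ω * B2)) :=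
  dcgd_tuned_bound_general f L fstar γ ω B2 K hL hsmooth hlb hωB hγ x e hiter herr
end
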